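/- In the quasilinear economy with goods I = {a, b, c, d}, six agents with valuations V1(x) = x_a + x_b + x_c + x_d, V2(x) = 3·min{x_a, x_b}, V3(x) = 3·min{x_b, x_c}, V4(x) = 3·min{x_c, x_d}, V5(x) = 3·min{x_d, x_a}, V6(x) = 3·min{x_a, x_b, x_c, x_d} on domains {0,1}^4, a competitive equilibrium exists for the total endowment (1,1,1,1): there exist p ∈ ℝ^4 and bundles x^1,...,x^6 ∈ {0,1}^4 summing to (1,1,1,1) with each x^j maximizing V^j(x) − p·x. -/

import Mathlib

def dot4 (p : Fin 4 → ℝ) (x : Fin 4 → ℕ) : ℝ := ∑ i, p i * (x i : ℝ)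

def W1 (x : Fin 4 → ℕ) : ℝ := (x 0 : ℝ) + (x 1 : ℝ) + (x 2 : ℝ) + (x 3 : ℝ)
def W2 (x : Fin 4 → ℕ) : ℝ := 3 * min (x 0 : ℝ) (x 1 : ℝ)
def W3 (x : Fin 4 → ℕ) : ℝ := 3 * min (x 1 : ℝ) (x 2 : ℝ)
def W4 (x : Fin 4 → ℕ) : ℝ := 3 * min (x 2 : ℝ) (x 3 : ℝ)
def W5 (x : Fin 4 → ℕ) : ℝ := 3 * min (x 3 : ℝ) (x 0 : ℝ)
def W6 (x : Fin 4 → ℕ) : ℝ := 3 * min (min (x 0 : ℝ) (x 1 : ℝ)) (min (x 2 : ℝ) (x 3 : ℝ))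

def Ws : Fin 6 → (Fin 4 → ℕ) → ℝ := ![W1, W2, W3, W4, W5, W6]

/-! At the uniform price 3/2 every agent's surplus `Ws j y - dot4 p y` is nonpositive: agent 1 values
each good at 1, and agents 2–6 value a set of at least two goods at 3. Agent 2 gets `{a, b}` and
agent 4 gets `{c, d}`, each at surplus exactly 0, while the other agents get nothing. -/

lemma dot4_const (c : ℝ) (x : Fin 4 → ℕ) : dot4 (fun _ => c) x = c * ∑ i, (x i : ℝ) := by
  rw [dot4, Finset.mul_sum]

lemma three_mul_min_le (a b : ℝ) : 3 * min a b ≤ 3 / 2 * (a + b) := by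
  linarith [min_le_left a b, min_le_right a b]

lemma Ws_le_three_halves_mul_sum (j : Fin 6) (y : Fin 4 → ℕ) :
    Ws j y ≤ 3 / 2 * ∑ i, (y i : ℝ) := by
  have hy : ∀ i, (0 : ℝ) ≤ y i := fun i => Nat.cast_nonneg _
  have h01 := three_mul_min_le (y 0) (y 1)
  have h12 := three_mul_min_le (y 1) (y 2)
  have h23 := three_mul_min_le (y 2) (y 3)
  have h30 := three_mul_min_le (y 3) (y 0)
  have h0123 := min_le_left (min (y 0 : ℝ) (y 1)) (min (y 2 : ℝ) (y 3))
  fin_cases j <;> simp only [Ws, Fin.reduceFinMk, Fin.zero_eta, Fin.mk_one, Fin.isValue, Matrix.cons_val',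
      Matrix.cons_val_fin_one, Matrix.cons_val, Matrix.cons_val_one, Matrix.cons_val_zero, Fin.sum_univ_four,
      W1, W2, W3, W4, W5, W6] <;>
    linarith [hy 0, hy 1, hy 2, hy 3]

def dklAllocation : Fin 6 → Fin 4 → ℕ := ![0, ![1, 1, 0, 0], 0, ![0, 0, 1, 1], 0, 0]

lemma Ws_dklAllocation (j : Fin 6) :
    Ws j (dklAllocation j) = 3 / 2 * ∑ i, (dklAllocation j i : ℝ) := by
  fin_cases j <;> norm_num [Ws, W1, W2, W3, W4, W5, W6, dklAllocation, Fin.sum_univ_four,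
    Matrix.cons_val_two, Matrix.cons_val_three]

/-- A competitive equilibrium exists in the economy of Example 3 (Danilov–Koshevoy–Lang). -/
theorem equilibrium_exists_dkl :
    ∃ (p : Fin 4 → ℝ) (x : Fin 6 → Fin 4 → ℕ),
      (∀ j i, x j i ≤ 1) ∧
      (∀ i, ∑ j, x j i = 1) ∧
      (∀ j, ∀ y : Fin 4 → ℕ, (∀ i, y i ≤ 1) →
        Ws j y - dot4 p y ≤ Ws j (x j) - dot4 p (x j)) := by
  refine ⟨fun _ => 3 / 2, dklAllocation, by decide, by decide, fun j y _ => ?_⟩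
  rw [dot4_const, dot4_const, Ws_dklAllocation]
  linarith [Ws_le_three_halves_mul_sum j y]
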